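/- The pp-wave metric satisfies the full Einstein equation in the void, i.e. the Einstein tensor G_{ab}(p) = Ric_{ab}(p) − (1/2) g_{ab}(p) S(p) vanishes for all p ∈ ℝ⁴ and all indices a, b, if and only if ∂₂∂₂H(p) + ∂₃∂₃H(p) = 0 for every p ∈ ℝ⁴; moreover for the pp-wave metric G_{ab}(p) = Ric_{ab}(p) at every point. -/
import Mathlib


noncomputable section

open scoped BigOperators

/-- Partial derivative of `f : ℝ⁴ → ℝ` in the `μ`-th coordinate direction. -/
def pd (μ : Fin 4) (f : (Fin 4 → ℝ) → ℝ) (p : Fin 4 → ℝ) : ℝ :=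
  fderiv ℝ f p (Pi.single μ 1)

/-- The pp-wave metric `ds² = 2H du² + 2 du dv − dx² − dy²` in coordinates
`(v,u,x,y)`. -/
def gmet (H : (Fin 4 → ℝ) → ℝ) (p : Fin 4 → ℝ) : Matrix (Fin 4) (Fin 4) ℝ :=
  Matrix.of fun μ ν =>
    if μ = 1 ∧ ν = 1 then 2 * H p
    else if (μ = 0 ∧ ν = 1) ∨ (μ = 1 ∧ ν = 0) then 1
    else if (μ = 2 ∧ ν = 2) ∨ (μ = 3 ∧ ν = 3) then (-1 : ℝ)
    else 0

/-- The pointwise inverse of the pp-wave metric. -/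
def ginv (H : (Fin 4 → ℝ) → ℝ) (p : Fin 4 → ℝ) : Matrix (Fin 4) (Fin 4) ℝ :=
  Matrix.of fun μ ν =>
    if μ = 0 ∧ ν = 0 then -2 * H p
    else if (μ = 0 ∧ ν = 1) ∨ (μ = 1 ∧ ν = 0) then 1
    else if (μ = 2 ∧ ν = 2) ∨ (μ = 3 ∧ ν = 3) then (-1 : ℝ)
    else 0

/-- Christoffel symbols `Γ^l_{μν}` of the Levi-Civita connection of the pp-wave metric. -/
def Γpp (H : (Fin 4 → ℝ) → ℝ) (l μ ν : Fin 4) (p : Fin 4 → ℝ) : ℝ :=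
  (1 / 2) * ∑ σ : Fin 4, ginv H p l σ *
    (pd μ (fun q => gmet H q ν σ) p + pd ν (fun q => gmet H q μ σ) p
      - pd σ (fun q => gmet H q μ ν) p)

/-- Riemann curvature components
`R^a_{bμν} = ∂_μ Γ^a_{bν} − ∂_ν Γ^a_{bμ} + Σ_γ (Γ^a_{γμ}Γ^γ_{bν} − Γ^a_{γν}Γ^γ_{bμ})`. -/
def Riem (H : (Fin 4 → ℝ) → ℝ) (a b μ ν : Fin 4) (p : Fin 4 → ℝ) : ℝ :=
  pd μ (Γpp H a b ν) p - pd ν (Γpp H a b μ) p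
    + ∑ γ : Fin 4, (Γpp H a γ μ p * Γpp H γ b ν p - Γpp H a γ ν p * Γpp H γ b μ p)

/-- Ricci tensor `Ric_{bν} = Σ_a R^a_{baν}`. -/
def Ricci (H : (Fin 4 → ℝ) → ℝ) (b ν : Fin 4) (p : Fin 4 → ℝ) : ℝ :=
  ∑ a : Fin 4, Riem H a b a ν p

/-- Scalar curvature `S = Σ_{β,ν} ginv^{βν} Ric_{βν}`. -/
def Scal (H : (Fin 4 → ℝ) → ℝ) (p : Fin 4 → ℝ) : ℝ :=
  ∑ b : Fin 4, ∑ ν : Fin 4, ginv H p b ν * Ricci H b ν p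


section Aux

variable {H : (Fin 4 → ℝ) → ℝ}

lemma pd_const (μ : Fin 4) (c : ℝ) (p : Fin 4 → ℝ) : pd μ (fun _ => c) p = 0 := by
  simp [pd]

lemma pd_two_mul (hH : ContDiff ℝ (⊤ : ℕ∞) H) (μ : Fin 4) (p : Fin 4 → ℝ) :
    pd μ (fun q => 2 * H q) p = 2 * pd μ H p := by
  unfold pd
  rw [fderiv_const_mul (hH.differentiable (by simp) p)]
  simp

lemma pd_gmet (hH : ContDiff ℝ (⊤ : ℕ∞) H) (μ ν σ : Fin 4) (p : Fin 4 → ℝ) :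
    pd μ (fun q => gmet H q ν σ) p = if ν = 1 ∧ σ = 1 then 2 * pd μ H p else 0 := by
  by_cases h : ν = 1 ∧ σ = 1
  · obtain ⟨rfl, rfl⟩ := h
    have : (fun q => gmet H q 1 1) = fun q => 2 * H q := by
      funext q; simp [gmet]
    rw [this, pd_two_mul hH]
    simp
  · have : (fun q => gmet H q ν σ) = fun _ =>
        (if (ν = 0 ∧ σ = 1) ∨ (ν = 1 ∧ σ = 0) then (1:ℝ)
         else if (ν = 2 ∧ σ = 2) ∨ (ν = 3 ∧ σ = 3) then (-1 : ℝ) else 0) := by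
      funext q; simp only [gmet, Matrix.of_apply, if_neg h]
    rw [this, pd_const]
    simp [h]

set_option maxHeartbeats 2000000 in
lemma Γ_eq (hH : ContDiff ℝ (⊤ : ℕ∞) H) (h0 : ∀ p, pd 0 H p = 0) (l μ ν : Fin 4) :
    Γpp H l μ ν = fun p =>
      if l = 0 then
        (if μ = 1 then (if ν = 1 then pd 1 H p else pd ν H p)
         else if ν = 1 then pd μ H p else 0)
      else if (l = 2 ∨ l = 3) ∧ μ = 1 ∧ ν = 1 then pd l H p else 0 := by
  funext p
  simp only [Γpp, Fin.sum_univ_four, pd_gmet hH, ginv, Matrix.of_apply]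
  fin_cases l <;> fin_cases μ <;> fin_cases ν <;> simp +decide [h0]

lemma fderiv_contDiff (hH : ContDiff ℝ (⊤ : ℕ∞) H) :
    ContDiff ℝ (⊤ : ℕ∞) (fderiv ℝ H) := hH.fderiv_right (by simp)

lemma pd_swap (hH : ContDiff ℝ (⊤ : ℕ∞) H) (μ ν : Fin 4) (p : Fin 4 → ℝ) :
    pd μ (pd ν H) p = pd ν (pd μ H) p := by
  have h1 : ∀ y, HasFDerivAt H (fderiv ℝ H y) y := fun y =>
    (hH.differentiable (by simp) y).hasFDerivAt
  have hd : DifferentiableAt ℝ (fderiv ℝ H) p :=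
    ((fderiv_contDiff hH).differentiable (by simp)) p
  have h2 : HasFDerivAt (fderiv ℝ H) (fderiv ℝ (fderiv ℝ H) p) p := hd.hasFDerivAt
  have e : ∀ v : Fin 4 → ℝ, ∀ w : Fin 4,
      pd w (fun q => fderiv ℝ H q v) p = fderiv ℝ (fderiv ℝ H) p (Pi.single w 1) v := by
    intro v w
    unfold pd
    rw [fderiv_clm_apply hd (differentiableAt_const v)]
    simp
  have := second_derivative_symmetric h1 h2 (Pi.single μ 1) (Pi.single ν 1)
  show pd μ (fun q => fderiv ℝ H q (Pi.single ν 1)) p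
      = pd ν (fun q => fderiv ℝ H q (Pi.single μ 1)) p
  rw [e, e, this]

lemma pd0pd (hH : ContDiff ℝ (⊤ : ℕ∞) H) (h0 : ∀ p, pd 0 H p = 0) (ν : Fin 4)
    (p : Fin 4 → ℝ) : pd 0 (pd ν H) p = 0 := by
  rw [pd_swap hH]
  have : pd 0 H = fun _ => (0:ℝ) := funext h0
  rw [this, pd_const]

set_option maxHeartbeats 2000000 in
lemma Ricci_eq (hH : ContDiff ℝ (⊤ : ℕ∞) H) (h0 : ∀ p, pd 0 H p = 0) (b ν : Fin 4)
    (p : Fin 4 → ℝ) :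
    Ricci H b ν p = if b = 1 ∧ ν = 1 then pd 2 (pd 2 H) p + pd 3 (pd 3 H) p else 0 := by
  fin_cases b <;> fin_cases ν <;>
    simp +decide [Ricci, Riem, Fin.sum_univ_four, Γ_eq hH h0, h0, pd_const,
      pd0pd hH h0]

lemma Scal_eq (hH : ContDiff ℝ (⊤ : ℕ∞) H) (h0 : ∀ p, pd 0 H p = 0)
    (p : Fin 4 → ℝ) : Scal H p = 0 := by
  simp +decide [Scal, Fin.sum_univ_four, Ricci_eq hH h0, ginv]

end Aux

/-- The Einstein tensor `G_{ab} = Ric_{ab} − ½ g_{ab} S` of the pp-wave metric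
vanishes identically iff `∂₂∂₂H + ∂₃∂₃H = 0`; moreover `G_{ab} = Ric_{ab}`
pointwise for this metric. -/
theorem pp_wave_einstein_iff_harmonic (H : (Fin 4 → ℝ) → ℝ)
    (hH : ContDiff ℝ (⊤ : ℕ∞) H) (h0 : ∀ p, pd 0 H p = 0) :
    ((∀ (p : Fin 4 → ℝ) (a b : Fin 4),
        Ricci H a b p - (1 / 2) * gmet H p a b * Scal H p = 0) ↔
      (∀ p : Fin 4 → ℝ, pd 2 (pd 2 H) p + pd 3 (pd 3 H) p = 0)) ∧
    ∀ (p : Fin 4 → ℝ) (a b : Fin 4),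
      Ricci H a b p - (1 / 2) * gmet H p a b * Scal H p = Ricci H a b p := by
  refine ⟨⟨fun hG p => ?_, fun hh p a b => ?_⟩, fun p a b => by simp [Scal_eq hH h0]⟩
  · have := hG p 1 1
    rw [Scal_eq hH h0, Ricci_eq hH h0] at this
    simpa using this
  · rw [Scal_eq hH h0, Ricci_eq hH h0]
    simp [hh p]
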